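/- Suppose the positive integer t is not a power of two. Then the number of odd entries among a_t(t, 0), a_t(t, 1), ..., a_t(t, t), where a_t(t,k) = C(t,k) - C(t,k-t), equals 2^{d(t)} - 1, which is an odd number greater than one and hence not a power of two. -/

import Mathlib

/-!
By Lucas's theorem modulo 2, `C(t, k)` is odd exactly when the binary digits of `k` form a
subset of those of `t`, so `2 ^ d(t)` of the `k ≤ t` give an odd `C(t, k)`. For `k ≤ t` the
correction `C(t, k - t)` vanishes except at `k = t`, where it cancels `C(t, t) = 1`; this removes
exactly one of them. Since `t` is neither `0` nor a power of two, `d(t) ≥ 2`, and `2 ^ d(t) - 1`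
is odd and at least `3`.
-/

/-- Binomial coefficient on integers, zero unless `0 ≤ q ≤ p`. -/
def Cz (p q : ℤ) : ℤ := if 0 ≤ q ∧ q ≤ p then ((p.toNat).choose q.toNat : ℤ) else 0

/-- `d n` is the number of ones in the binary representation of `n`. -/
def dbin (n : ℕ) : ℕ := (Nat.digits 2 n).count 1

theorem dbin_eq_length_bitIndices (n : ℕ) : dbin n = n.bitIndices.length := by
  induction n using Nat.strong_induction_on with
  | _ n ih =>
    rcases Nat.eq_zero_or_pos n with rfl | hn
    · simp [dbin]
    rw [dbin, Nat.digits_def' one_lt_two hn, List.count_cons, ← dbin, ih (n / 2) (by omega)]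
    obtain ⟨m, rfl | rfl⟩ := Nat.even_or_odd' n <;> simp [Nat.mul_add_div]

theorem Nat.odd_choose_iff_testBit {n k : ℕ} :
    Odd (n.choose k) ↔ ∀ i, k.testBit i → n.testBit i := by
  induction k using Nat.strong_induction_on generalizing n with
  | _ k ih =>
    rcases Nat.eq_zero_or_pos k with rfl | hk
    · simp
    have hlucas : Odd (n.choose k) ↔
        Odd ((n % 2).choose (k % 2)) ∧ Odd ((n / 2).choose (k / 2)) := by
      rw [← Nat.odd_mul, Nat.odd_iff, Nat.odd_iff,
        Choose.choose_modEq_choose_mod_mul_choose_div_nat (p := 2)]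
    have hlow : Odd ((n % 2).choose (k % 2)) ↔ (k.testBit 0 → n.testBit 0) := by
      rcases Nat.mod_two_eq_zero_or_one n with hn | hn <;>
        rcases Nat.mod_two_eq_zero_or_one k with hk | hk <;> simp [hn, hk, Nat.testBit_zero]
    rw [hlucas, hlow, ih (k / 2) (by omega)]
    constructor
    · rintro ⟨h0, hs⟩ (_ | i)
      · exact h0
      · simpa [Nat.testBit_add_one] using hs i
    · intro h
      exact ⟨h 0, fun i => by simpa [Nat.testBit_add_one] using h (i + 1)⟩

theorem card_filter_odd_choose (n : ℕ) :
    ((Finset.range (n + 1)).filter fun k => Odd (n.choose k)).card = 2 ^ dbin n := by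
  have hsubmask : ((Finset.range (n + 1)).filter fun k => Odd (n.choose k)) =
      n.bitIndices.toFinset.powerset.map Finset.equivBitIndices.symm.toEmbedding := by
    ext k
    simp only [Finset.mem_filter, Finset.mem_range, Finset.mem_map_equiv, Equiv.symm_symm,
      Finset.equivBitIndices_apply, Finset.mem_powerset, Finset.subset_iff, List.mem_toFinset,
      Nat.mem_bitIndices, ← Nat.odd_choose_iff_testBit]
    refine ⟨And.right, fun h => ⟨Nat.lt_succ_of_le ?_, h⟩⟩
    by_contra hlt
    simp [Nat.choose_eq_zero_of_lt (not_le.mp hlt)] at h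
  rw [hsubmask, Finset.card_map, Finset.card_powerset, List.card_toFinset,
    Nat.bitIndices_nodup.dedup, dbin_eq_length_bitIndices]

theorem two_le_dbin {n : ℕ} (hn : 0 < n) (hpow : ¬∃ q, n = 2 ^ q) : 2 ≤ dbin n := by
  rw [dbin_eq_length_bitIndices]
  have hsum := Nat.sum_map_two_pow_bitIndices n
  by_contra! hlen
  interval_cases h : n.bitIndices.length
  · rw [List.length_eq_zero_iff.mp h] at hsum
    simp at hsum
    omega
  · obtain ⟨q, hq⟩ := List.length_eq_one_iff.mp h
    rw [hq] at hsum
    exact hpow ⟨q, by simpa using hsum.symm⟩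

theorem Cz_natCast_of_le {n k : ℕ} (hk : k ≤ n) : Cz n k = n.choose k := by
  simp [Cz, hk]

theorem Cz_natCast_sub_natCast_of_le {n k : ℕ} (hk : k ≤ n) :
    Cz n ((k : ℤ) - n) = if k = n then 1 else 0 := by
  split_ifs with h
  · simp [Cz, h]
  · simp only [Cz]; rw [if_neg (by omega)]

theorem odd_Cz_sub_Cz_iff {n k : ℕ} (hk : k ≤ n) :
    Odd (Cz n k - Cz n ((k : ℤ) - n)) ↔ k ≠ n ∧ Odd (n.choose k) := by
  rw [Cz_natCast_of_le hk, Cz_natCast_sub_natCast_of_le hk]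
  split_ifs with h
  · simp [h]
  · simp [h, Int.odd_coe_nat]

theorem not_exists_eq_two_pow_of_odd {n : ℕ} (hodd : Odd n) (hn : 1 < n) :
    ¬∃ m, n = 2 ^ m := by
  rintro ⟨m, rfl⟩
  rcases m with _ | m
  · simp at hn
  · exact Nat.not_even_iff_odd.mpr hodd (by simp [Nat.even_pow])

theorem filter_odd_Cz_sub_Cz_eq_erase (n : ℕ) :
    ((Finset.range (n + 1)).filter fun k : ℕ => Odd (Cz n (k : ℤ) - Cz n ((k : ℤ) - n))) =
      ((Finset.range (n + 1)).filter fun k => Odd (n.choose k)).erase n := by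
  ext k
  simp only [Finset.mem_erase, Finset.mem_filter, Finset.mem_range]
  constructor
  · rintro ⟨hk, hodd⟩
    obtain ⟨hne, hchoose⟩ := (odd_Cz_sub_Cz_iff (Nat.le_of_lt_succ hk)).mp hodd
    exact ⟨hne, hk, hchoose⟩
  · rintro ⟨hne, hk, hchoose⟩
    exact ⟨hk, (odd_Cz_sub_Cz_iff (Nat.le_of_lt_succ hk)).mpr ⟨hne, hchoose⟩⟩

theorem stmt15 (t : ℕ) (ht : 0 < t) (hnp : ¬∃ q : ℕ, t = 2 ^ q) :
    ((Finset.range (t + 1)).filter fun k : ℕ =>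
        Odd (Cz t (k : ℤ) - Cz t ((k : ℤ) - t))).card = 2 ^ dbin t - 1
      ∧ Odd (2 ^ dbin t - 1)
      ∧ 1 < 2 ^ dbin t - 1
      ∧ ¬∃ m : ℕ, 2 ^ dbin t - 1 = 2 ^ m := by
  have hd := two_le_dbin ht hnp
  have hpow : 4 ≤ 2 ^ dbin t := by
    calc 4 = 2 ^ 2 := rfl
      _ ≤ 2 ^ dbin t := Nat.pow_le_pow_right two_pos hd
  have hodd : Odd (2 ^ dbin t - 1) :=
    Nat.Even.sub_odd (by omega) (Nat.even_pow.mpr ⟨even_two, by omega⟩) odd_one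
  refine ⟨?_, hodd, by omega, not_exists_eq_two_pow_of_odd hodd (by omega)⟩
  rw [filter_odd_Cz_sub_Cz_eq_erase, Finset.card_erase_of_mem (by simp [Nat.choose_self]),
    card_filter_odd_choose]
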